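/- Joni's theorem (two-sided bounds from lower bounds): for every policy π, pDL formula φ, pGCL program s, valuation ε, and expectation lower bounds p₁, p₂, if ε ⊨ [s]_{p₁} φ and ε ⊨ [s]_{p₂} ¬φ, then the expected reward E_{⟨ε,s⟩,π} [φ] under the fixed policy π lies in the interval [p₁(ε), 1 − p₂(ε)]. -/

import Mathlib

/-!
The lower bound holds because the demonic expectation is an infimum over policies. For the upper
bound, `[φ] + [¬φ] = 1` pointwise, so `E_π[φ] + E_π[¬φ]` is the total probability of the
terminating paths under `π`; this is at most `1` because the outgoing probabilities of every state
sum to at most `1`, which propagates to paths by induction on their length, grouping paths by their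
first step. Together with `p₂(ε) ≤ E_π[¬φ]` this gives `E_π[φ] ≤ 1 - p₂(ε)`.
-/

namespace PGCL

/-- Program valuations: maps from program variables to real values. -/
abbrev PVal : Type := String → ℝ

/-- Logical environments: maps from logical variables to their values.
    Logical variables are disjoint from program variables and cannot be
    accessed by programs. -/
abbrev LEnv : Type := String → ℝ

/-- Syntax of the probabilistic guarded command language pGCL.
    Expressions are embedded shallowly as functions of the valuation. -/
inductive Stmt : Type
  | skip : Stmt
  | assign (x : String) (e : PVal → ℝ) : Stmt
  | seq (s₁ s₂ : Stmt) : Stmt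
  /-- demonic (non-deterministic) choice `s₁ ⊓ s₂` -/
  | dem (s₁ s₂ : Stmt) : Stmt
  /-- probabilistic choice `s₁ [e] s₂` -/
  | prob (e : PVal → ℝ) (s₁ s₂ : Stmt) : Stmt
  | ifte (e : PVal → Bool) (s₁ s₂ : Stmt) : Stmt
  | whileLoop (e : PVal → Bool) (s : Stmt) : Stmt

/-- States of the MDP semantics: a valuation paired with the remaining program.
    `(ε, Stmt.skip)` is final. -/
abbrev PState : Type := PVal × Stmt

/-- A positional policy resolves each demonic choice (true = left branch). -/
abbrev Policy : Type := PState → Bool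

/-- One-step transition relation of the MDP semantics of pGCL, under policy `π`:
    `Step π σ p σ'` means σ steps to σ' with probability `p`. -/
inductive Step (π : Policy) : PState → ℝ → PState → Prop
  | assign {ε : PVal} {x : String} {e : PVal → ℝ} :
      Step π (ε, Stmt.assign x e) 1 (Function.update ε x (e ε), Stmt.skip)
  | seqSkip {ε ε' : PVal} {s₁ s₂ : Stmt} {p : ℝ} :
      Step π (ε, s₁) p (ε', s₂) → Step π (ε, Stmt.seq Stmt.skip s₁) p (ε', s₂)
  | seqStep {ε ε' : PVal} {s₁ s₂ s : Stmt} {p : ℝ} :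
      Step π (ε, s₁) p (ε', s₂) → Step π (ε, Stmt.seq s₁ s) p (ε', Stmt.seq s₂ s)
  | probL {ε : PVal} {e : PVal → ℝ} {s₁ s₂ : Stmt} :
      0 ≤ e ε → e ε ≤ 1 → Step π (ε, Stmt.prob e s₁ s₂) (e ε) (ε, s₁)
  | probR {ε : PVal} {e : PVal → ℝ} {s₁ s₂ : Stmt} :
      0 ≤ e ε → e ε ≤ 1 → Step π (ε, Stmt.prob e s₁ s₂) (1 - e ε) (ε, s₂)
  | demL {ε : PVal} {s₁ s₂ : Stmt} :
      π (ε, Stmt.dem s₁ s₂) = true → Step π (ε, Stmt.dem s₁ s₂) 1 (ε, s₁)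
  | demR {ε : PVal} {s₁ s₂ : Stmt} :
      π (ε, Stmt.dem s₁ s₂) = false → Step π (ε, Stmt.dem s₁ s₂) 1 (ε, s₂)
  | iteT {ε : PVal} {e : PVal → Bool} {s₁ s₂ : Stmt} :
      e ε = true → Step π (ε, Stmt.ifte e s₁ s₂) 1 (ε, s₁)
  | iteF {ε : PVal} {e : PVal → Bool} {s₁ s₂ : Stmt} :
      e ε = false → Step π (ε, Stmt.ifte e s₁ s₂) 1 (ε, s₂)
  | whileT {ε : PVal} {e : PVal → Bool} {s : Stmt} :
      e ε = true →
        Step π (ε, Stmt.whileLoop e s) 1 (ε, Stmt.seq s (Stmt.whileLoop e s))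
  | whileF {ε : PVal} {e : PVal → Bool} {s : Stmt} :
      e ε = false → Step π (ε, Stmt.whileLoop e s) 1 (ε, Stmt.skip)

/-- Finite paths under a policy `π` from a state to a final state. -/
inductive MPath (π : Policy) : PState → Type
  | nil (ε : PVal) : MPath π (ε, Stmt.skip)
  | cons {σ σ' : PState} (p : ℝ) (h : Step π σ p σ') (rest : MPath π σ') : MPath π σ

/-- The probability of a path: the product of its transition probabilities. -/
noncomputable def MPath.prob {π : Policy} : {σ : PState} → MPath π σ → ℝ
  | _, .nil _ => 1
  | _, .cons p _ rest => p * rest.prob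

/-- The valuation in the final state of a path. -/
def MPath.finalVal {π : Policy} : {σ : PState} → MPath π σ → PVal
  | _, .nil ε => ε
  | _, .cons _ _ rest => rest.finalVal

/-- Expected reward `E_{σ,π} r`: the sum over all paths from σ under π of the
    probability of the path times the reward of its final valuation. -/
noncomputable def expReward (π : Policy) (σ : PState) (r : PVal → ℝ) : ℝ :=
  ∑' ρ : MPath π σ, ρ.prob * r ρ.finalVal

/-- Expectation `𝔼_σ r`: infimum over all policies of the expected reward. -/
noncomputable def expectation (σ : PState) (r : PVal → ℝ) : ℝ :=
  ⨅ π : Policy, expReward π σ r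

open Classical in
/-- Characteristic (indicator) function of a proposition. -/
noncomputable def ind (P : Prop) : ℝ := if P then 1 else 0

/-- Formulae of probabilistic dynamic logic pDL. Atomic formulae are embedded
    shallowly as predicates over the program valuation and logical environment. -/
inductive Formula : Type
  | atom (A : PVal → LEnv → Prop) : Formula
  | neg (φ : Formula) : Formula
  | conj (φ₁ φ₂ : Formula) : Formula
  /-- universal quantification over the logical variable `l` (domain ℝ) -/
  | all (l : String) (φ : Formula) : Formula
  /-- the p-box modality `[s]_p φ` -/
  | box (s : Stmt) (p : PVal → ℝ) (φ : Formula) : Formula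

/-- Satisfaction `ε, η ⊨ φ` of pDL formulae. -/
def Sat : Formula → PVal → LEnv → Prop
  | .atom A, ε, η => A ε η
  | .neg φ, ε, η => ¬ Sat φ ε η
  | .conj φ₁ φ₂, ε, η => Sat φ₁ ε η ∧ Sat φ₂ ε η
  | .all l φ, ε, η => ∀ v : ℝ, Sat φ ε (Function.update η l v)
  | .box s p φ, ε, η => p ε ≤ expectation (ε, s) (fun ε' => ind (Sat φ ε' η))

/-- Disjunction `φ₁ ∨ φ₂ := ¬(¬φ₁ ∧ ¬φ₂)`. -/
def Formula.disj (φ₁ φ₂ : Formula) : Formula := .neg (.conj (.neg φ₁) (.neg φ₂))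

/-- Existential quantification `∃l·φ := ¬∀l·¬φ`. -/
def Formula.ex (l : String) (φ : Formula) : Formula := .neg (.all l (.neg φ))

/-- A program is purely probabilistic if it contains no demonic choice. -/
def DemFree : Stmt → Prop
  | .skip => True
  | .assign _ _ => True
  | .seq s₁ s₂ => DemFree s₁ ∧ DemFree s₂
  | .dem _ _ => False
  | .prob _ s₁ s₂ => DemFree s₁ ∧ DemFree s₂
  | .ifte _ s₁ s₂ => DemFree s₁ ∧ DemFree s₂
  | .whileLoop _ s => DemFree s

end PGCL

theorem Finset.sum_le_list_sum_of_subset_of_nonneg {ι M : Type*} [AddCommMonoid M] [PartialOrder M]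
    [IsOrderedAddMonoid M] {S : Finset ι} {l : List ι} {f : ι → M} (hS : ∀ x ∈ S, x ∈ l)
    (hf : ∀ x ∈ l, 0 ≤ f x) : ∑ x ∈ S, f x ≤ (l.map f).sum := by
  classical
  calc ∑ x ∈ S, f x ≤ ∑ x ∈ l.toFinset, f x :=
        Finset.sum_le_sum_of_subset_of_nonneg (fun x hx => List.mem_toFinset.mpr (hS x hx))
          fun x hx _ => hf x (List.mem_toFinset.mp hx)
    _ = (l.dedup.map f).sum := by
        rw [← List.sum_toFinset _ (List.nodup_dedup l)]; congr 1; ext; simp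
    _ ≤ (l.map f).sum := ((List.dedup_sublist l).map f).sum_le_sum (by simpa using hf)

namespace PGCL

instance : Inhabited Stmt := ⟨.skip⟩

noncomputable def succs (π : Policy) : PState → List (ℝ × PState)
  | (_, .skip) => []
  | (ε, .assign x e) => [(1, (Function.update ε x (e ε), .skip))]
  | (ε, .seq .skip s) => succs π (ε, s)
  | (ε, .seq s₁ s) => (succs π (ε, s₁)).map fun q => (q.1, (q.2.1, .seq q.2.2 s))
  | (ε, .dem s₁ s₂) => [(1, (ε, if π (ε, .dem s₁ s₂) then s₁ else s₂))]
  | (ε, .prob e s₁ s₂) =>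
      if 0 ≤ e ε ∧ e ε ≤ 1 then [(e ε, (ε, s₁)), (1 - e ε, (ε, s₂))] else []
  | (ε, .ifte e s₁ s₂) => [(1, (ε, if e ε then s₁ else s₂))]
  | (ε, .whileLoop e s) => [(1, (ε, if e ε then .seq s (.whileLoop e s) else .skip))]

variable {π : Policy}

theorem Step.mem_succs {σ σ' : PState} {p : ℝ} (h : Step π σ p σ') : (p, σ') ∈ succs π σ := by
  induction h with
  | seqSkip _ ih => simpa [succs] using ih
  | @seqStep ε _ s₁ _ s _ hs ih =>
    have hs₁ : s₁ ≠ .skip := by rintro rfl; cases hs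
    rw [succs.eq_4 π ε s₁ s hs₁]
    exact List.mem_map.mpr ⟨_, ih, rfl⟩
  | demL h | demR h | iteT h | iteF h | whileT h | whileF h => simp [succs, h]
  | probL h₀ h₁ | probR h₀ h₁ => simp [succs, h₀, h₁]
  | assign => simp [succs]

theorem nonneg_of_mem_succs {σ : PState} {x : ℝ × PState} (hx : x ∈ succs π σ) : 0 ≤ x.1 := by
  obtain ⟨ε, s⟩ := σ
  induction s generalizing ε x with
  | skip => simp [succs] at hx
  | assign | dem | ifte | whileLoop => simp_all [succs]
  | seq s₁ s ih₁ ih₂ =>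
    by_cases hs₁ : s₁ = .skip
    · subst hs₁; simp only [succs] at hx; exact ih₂ ε hx
    · rw [succs.eq_4 π ε s₁ s hs₁] at hx
      obtain ⟨y, hy, rfl⟩ := List.mem_map.mp hx
      exact ih₁ ε (x := y) hy
  | prob e s₁ s₂ =>
    unfold succs at hx
    split_ifs at hx with he
    · rcases List.mem_pair.mp hx with rfl | rfl
      · exact he.1
      · exact sub_nonneg.mpr he.2
    · simp at hx

theorem sum_succs_le_one (σ : PState) : ((succs π σ).map Prod.fst).sum ≤ 1 := by
  obtain ⟨ε, s⟩ := σ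
  induction s generalizing ε with
  | skip => simp [succs]
  | assign | dem | ifte | whileLoop => simp [succs]
  | seq s₁ s ih₁ ih₂ =>
    by_cases hs₁ : s₁ = .skip
    · subst hs₁; simpa only [succs] using ih₂ ε
    · rw [succs.eq_4 π ε s₁ s hs₁, List.map_map]
      exact ih₁ ε
  | prob e s₁ s₂ =>
    unfold succs
    split_ifs <;> simp

theorem Step.prob_nonneg {σ σ' : PState} {p : ℝ} (h : Step π σ p σ') : 0 ≤ p :=
  nonneg_of_mem_succs h.mem_succs

theorem sum_fst_le_one_of_step {σ : PState} {S : Finset (ℝ × PState)}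
    (hS : ∀ x ∈ S, Step π σ x.1 x.2) : ∑ x ∈ S, x.1 ≤ 1 :=
  (Finset.sum_le_list_sum_of_subset_of_nonneg (fun x hx => (hS x hx).mem_succs)
    fun _ => nonneg_of_mem_succs).trans (sum_succs_le_one σ)

inductive IsTrace (π : Policy) : PState → List (ℝ × PState) → Prop
  | nil (ε : PVal) : IsTrace π (ε, .skip) []
  | cons {σ σ' : PState} {p : ℝ} {l : List (ℝ × PState)} :
      Step π σ p σ' → IsTrace π σ' l → IsTrace π σ ((p, σ') :: l)

noncomputable def traceProb (l : List (ℝ × PState)) : ℝ := (l.map Prod.fst).prod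

theorem traceProb_cons (x : ℝ × PState) (l : List (ℝ × PState)) :
    traceProb (x :: l) = x.1 * traceProb l := rfl

namespace IsTrace

theorem eq_nil_of_skip {ε : PVal} {l : List (ℝ × PState)} (h : IsTrace π (ε, .skip) l) :
    l = [] := by
  cases h with
  | nil => rfl
  | cons hs _ => cases hs

theorem step_head {σ : PState} {x : ℝ × PState} {l : List (ℝ × PState)}
    (h : IsTrace π σ (x :: l)) : Step π σ x.1 x.2 := by
  cases h with
  | cons hs _ => exact hs

theorem of_cons {σ : PState} {x : ℝ × PState} {l : List (ℝ × PState)}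
    (h : IsTrace π σ (x :: l)) : IsTrace π x.2 l := by
  cases h with
  | cons _ hl => exact hl

theorem ne_nil {σ : PState} {l l' : List (ℝ × PState)} (h : IsTrace π σ l)
    (h' : IsTrace π σ l') (hl' : l' ≠ []) : l ≠ [] := by
  rintro rfl
  cases h
  exact hl' h'.eq_nil_of_skip

end IsTrace

open Classical in
theorem sum_traceProb_eq_mul_of_forall_eq_cons (x : ℝ × PState) {F : Finset (List (ℝ × PState))}
    (hF : ∀ l ∈ F, l = x :: l.tail) :
    ∑ l ∈ F, traceProb l = x.1 * ∑ t ∈ F.image List.tail, traceProb t := by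
  rw [Finset.sum_image fun l hl l' hl' h => by rw [hF l hl, hF l' hl', h], Finset.mul_sum]
  refine Finset.sum_congr rfl fun l hl => ?_
  rw [← traceProb_cons, ← hF l hl]

theorem sum_traceProb_le_one_of_subset_nil {L : Finset (List (ℝ × PState))}
    (hL : ∀ l ∈ L, l = []) : ∑ l ∈ L, traceProb l ≤ 1 := by
  rcases Finset.subset_singleton_iff.mp fun l hl => Finset.mem_singleton.mpr (hL l hl) with
    rfl | rfl <;> simp [traceProb]

theorem sum_traceProb_le_one (n : ℕ) {σ : PState} {L : Finset (List (ℝ × PState))}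
    (hL : ∀ l ∈ L, IsTrace π σ l ∧ l.length ≤ n) : ∑ l ∈ L, traceProb l ≤ 1 := by
  classical
  induction n generalizing σ L with
  | zero =>
    exact sum_traceProb_le_one_of_subset_nil fun l hl =>
      List.eq_nil_of_length_eq_zero (Nat.le_zero.mp (hL l hl).2)
  | succ n ih =>
    by_cases hnil : ∀ l ∈ L, l = []
    · exact sum_traceProb_le_one_of_subset_nil hnil
    push Not at hnil
    obtain ⟨l₀, hl₀, hne⟩ := hnil
    have hcons : ∀ l ∈ L, l = l.head! :: l.tail := fun l hl =>
      (List.cons_head!_tail ((hL l hl).1.ne_nil (hL l₀ hl₀).1 hne)).symm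
    have hfiber : ∀ x ∈ L.image List.head!, ∑ l ∈ L with l.head! = x, traceProb l ≤ x.1 := by
      intro x hx
      have hx₀ : 0 ≤ x.1 := by
        obtain ⟨l, hl, rfl⟩ := Finset.mem_image.mp hx
        exact (hcons l hl ▸ (hL l hl).1).step_head.prob_nonneg
      have hfib : ∀ l ∈ L.filter (·.head! = x), l = x :: l.tail := fun l hl => by
        obtain ⟨hlL, rfl⟩ := Finset.mem_filter.mp hl
        exact hcons l hlL
      rw [sum_traceProb_eq_mul_of_forall_eq_cons x hfib]
      refine mul_le_of_le_one_right hx₀ (ih (σ := x.2) fun t ht => ?_)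
      obtain ⟨l, hl, rfl⟩ := Finset.mem_image.mp ht
      obtain ⟨htrace, hlen⟩ := hL l (Finset.mem_filter.mp hl).1
      rw [hfib l hl] at htrace hlen
      exact ⟨htrace.of_cons, Nat.le_of_succ_le_succ hlen⟩
    calc ∑ l ∈ L, traceProb l
        = ∑ x ∈ L.image List.head!, ∑ l ∈ L with l.head! = x, traceProb l :=
          (Finset.sum_fiberwise_of_maps_to (fun l hl => Finset.mem_image_of_mem _ hl) _).symm
      _ ≤ ∑ x ∈ L.image List.head!, x.1 := Finset.sum_le_sum hfiber
      _ ≤ 1 := sum_fst_le_one_of_step fun x hx => by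
          obtain ⟨l, hl, rfl⟩ := Finset.mem_image.mp hx
          exact (hcons l hl ▸ (hL l hl).1).step_head

namespace MPath

/-- Paths are indexed by their start state, so their tails live in different types; traces forget
the indexing, which lets paths be grouped by their first step. -/
def trace : {σ : PState} → MPath π σ → List (ℝ × PState)
  | _, .nil _ => []
  | _, .cons (σ' := σ') p _ rest => (p, σ') :: rest.trace

theorem isTrace_trace {σ : PState} (ρ : MPath π σ) : IsTrace π σ ρ.trace := by
  induction ρ with
  | nil ε => exact .nil ε
  | cons _ h _ ih => exact .cons h ih

theorem prob_eq_traceProb {σ : PState} (ρ : MPath π σ) : ρ.prob = traceProb ρ.trace := by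
  induction ρ with
  | nil => rfl
  | cons p _ _ ih => rw [prob, ih]; rfl

theorem prob_nonneg {σ : PState} (ρ : MPath π σ) : 0 ≤ ρ.prob := by
  induction ρ with
  | nil => exact zero_le_one
  | cons _ h _ ih => exact mul_nonneg h.prob_nonneg ih

theorem trace_injective {σ : PState} : Function.Injective (trace (π := π) (σ := σ)) := by
  intro ρ₁
  induction ρ₁ with
  | nil =>
    rintro (_ | _) h
    · rfl
    · simp [trace] at h
  | cons p _ _ ih =>
    rintro (_ | _) h
    · simp [trace] at h
    · simp only [trace, List.cons.injEq, Prod.mk.injEq] at h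
      obtain ⟨⟨rfl, rfl⟩, h⟩ := h
      rw [ih h]

theorem sum_prob_le_one {σ : PState} (F : Finset (MPath π σ)) : ∑ ρ ∈ F, ρ.prob ≤ 1 := by
  classical
  simp_rw [prob_eq_traceProb]
  rw [← Finset.sum_image fun ρ _ ρ' _ h => trace_injective h]
  refine sum_traceProb_le_one (π := π) (σ := σ) ((F.image trace).sup List.length) fun l hl => ?_
  obtain ⟨ρ, -, rfl⟩ := Finset.mem_image.mp hl
  exact ⟨ρ.isTrace_trace, Finset.le_sup hl⟩

theorem summable_prob (σ : PState) : Summable fun ρ : MPath π σ => ρ.prob :=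
  summable_of_sum_le prob_nonneg sum_prob_le_one

theorem tsum_prob_le_one (σ : PState) : ∑' ρ : MPath π σ, ρ.prob ≤ 1 :=
  (summable_prob σ).tsum_le_of_sum_le sum_prob_le_one

end MPath

theorem ind_nonneg (P : Prop) : 0 ≤ ind P := by
  unfold ind; split <;> norm_num

theorem ind_add_ind_not (P : Prop) : ind P + ind (¬P) = 1 := by
  unfold ind; by_cases h : P <;> simp [h]

section expReward

variable {σ : PState} {r r' : PVal → ℝ}

theorem expReward_nonneg (hr : ∀ v, 0 ≤ r v) : 0 ≤ expReward π σ r :=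
  tsum_nonneg fun ρ => mul_nonneg ρ.prob_nonneg (hr _)

theorem expectation_le_expReward (π : Policy) (hr : ∀ v, 0 ≤ r v) :
    expectation σ r ≤ expReward π σ r :=
  ciInf_le ⟨0, by rintro _ ⟨π', rfl⟩; exact expReward_nonneg hr⟩ π

theorem summable_expReward (hr₀ : ∀ v, 0 ≤ r v) (hr₁ : ∀ v, r v ≤ 1) :
    Summable fun ρ : MPath π σ => ρ.prob * r ρ.finalVal :=
  (MPath.summable_prob σ).of_nonneg_of_le (fun ρ => mul_nonneg ρ.prob_nonneg (hr₀ _))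
    fun ρ => mul_le_of_le_one_right ρ.prob_nonneg (hr₁ _)

theorem expReward_add_expReward_le_one (hr : ∀ v, 0 ≤ r v) (hr' : ∀ v, 0 ≤ r' v)
    (hsum : ∀ v, r v + r' v ≤ 1) : expReward π σ r + expReward π σ r' ≤ 1 := by
  have hs := summable_expReward (π := π) (σ := σ) hr fun v => by linarith [hr' v, hsum v]
  have hs' := summable_expReward (π := π) (σ := σ) hr' fun v => by linarith [hr v, hsum v]
  rw [expReward, expReward, ← hs.tsum_add hs']
  calc ∑' ρ : MPath π σ, (ρ.prob * r ρ.finalVal + ρ.prob * r' ρ.finalVal)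
      ≤ ∑' ρ : MPath π σ, ρ.prob :=
        (hs.add hs').tsum_le_tsum (fun ρ => by
          rw [← mul_add]; exact mul_le_of_le_one_right ρ.prob_nonneg (hsum _))
          (MPath.summable_prob σ)
    _ ≤ 1 := MPath.tsum_prob_le_one σ

end expReward

end PGCL

open PGCL

theorem joni_general (π : Policy) (ε : PVal) (η : LEnv) (s : Stmt) (φ : Formula)
    (p₁ p₂ : PVal → ℝ)
    (h₁ : Sat (.box s p₁ φ) ε η) (h₂ : Sat (.box s p₂ (.neg φ)) ε η) :
    expReward π (ε, s) (fun ε' => ind (Sat φ ε' η)) ∈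
      Set.Icc (p₁ ε) (1 - p₂ ε) := by
  have hlower : p₁ ε ≤ expReward π (ε, s) fun ε' => ind (Sat φ ε' η) :=
    h₁.trans (expectation_le_expReward π fun _ => ind_nonneg _)
  have hlower_neg : p₂ ε ≤ expReward π (ε, s) fun ε' => ind (¬Sat φ ε' η) :=
    h₂.trans (expectation_le_expReward π fun _ => ind_nonneg _)
  have htotal := expReward_add_expReward_le_one (π := π) (σ := (ε, s))
    (r := fun ε' => ind (Sat φ ε' η)) (r' := fun ε' => ind (¬Sat φ ε' η))
    (fun _ => ind_nonneg _) (fun _ => ind_nonneg _) fun _ => (ind_add_ind_not _).le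
  exact ⟨hlower, by linarith⟩

/-- Joni's theorem: if `ε ⊨ [s]_{p₁} φ` and `ε ⊨ [s]_{p₂} ¬φ`,
    then for any fixed policy `π` the expected reward `E_{⟨ε,s⟩,π}[φ]` lies in
    the interval `[p₁(ε), 1 − p₂(ε)]`. -/
theorem joni (π : Policy) (ε : PVal) (η : LEnv) (s : Stmt) (φ : Formula)
    (p₁ p₂ : PVal → ℝ)
    (hp₁ : ∀ ε', p₁ ε' ∈ Set.Icc (0 : ℝ) 1) (hp₂ : ∀ ε', p₂ ε' ∈ Set.Icc (0 : ℝ) 1)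
    (h₁ : Sat (.box s p₁ φ) ε η) (h₂ : Sat (.box s p₂ (.neg φ)) ε η) :
    expReward π (ε, s) (fun ε' => ind (Sat φ ε' η)) ∈
      Set.Icc (p₁ ε) (1 - p₂ ε) :=
  joni_general π ε η s φ p₁ p₂ h₁ h₂
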